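/- Let ζ₃ = e^{2πi/3} and ζ₈ = e^{2πi/8}, and let G ≤ SL(4,ℂ) be the subgroup generated by the five matrices diag(ζ₃, 1, 1, ζ₃⁻¹), diag(1, ζ₃, 1, ζ₃⁻¹), diag(1, 1, ζ₃, ζ₃⁻¹), ζ₈·P₍₁₂₎ (where P₍₁₂₎ is the permutation matrix exchanging the first two coordinates and fixing the last two), and P₍₁₃₎₍₂₄₎ (the permutation matrix exchanging the first coordinate with the third and the second with the fourth). Then G is contained in SL(4,ℂ), G acts irreducibly on ℂ⁴, and the cubic form x³ + y³ + u³ + v³ is a semi-invariant of G. -/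

import Mathlib

/-! The determinant condition and the semi-invariance of `x³ + y³ + u³ + v³` are multiplicative in
the group element, so it suffices to check them on the five generators; the character is then read
off at a point where the cubic does not vanish. For irreducibility, the three diagonal generators
take pairwise distinct joint eigenvalues on the four coordinate axes, so polynomials in them
contain every coordinate projection and an invariant subspace is spanned by the coordinate vectors
it contains. The two permutation generators act transitively on the axes. -/

open Matrix MvPolynomial

noncomputable def zeta3 : ℂ := Complex.exp (2 * Real.pi * Complex.I / 3)

noncomputable def zeta8 : ℂ := Complex.exp (2 * Real.pi * Complex.I / 8)

/-- The subgroup of `GL(4, ℂ)` generated by `diag(ζ₃,1,1,ζ₃⁻¹)`, `diag(1,ζ₃,1,ζ₃⁻¹)`,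
`diag(1,1,ζ₃,ζ₃⁻¹)`, `ζ₈·P₍₁₂₎` and `P₍₁₃₎₍₂₄₎`. -/
noncomputable def monomialGroup : Subgroup (GL (Fin 4) ℂ) :=
  Subgroup.closure
    {g | (g : Matrix (Fin 4) (Fin 4) ℂ) = Matrix.diagonal ![zeta3, 1, 1, zeta3⁻¹] ∨
      (g : Matrix (Fin 4) (Fin 4) ℂ) = Matrix.diagonal ![1, zeta3, 1, zeta3⁻¹] ∨
      (g : Matrix (Fin 4) (Fin 4) ℂ) = Matrix.diagonal ![1, 1, zeta3, zeta3⁻¹] ∨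
      (g : Matrix (Fin 4) (Fin 4) ℂ) =
        zeta8 • (!![0, 1, 0, 0; 1, 0, 0, 0; 0, 0, 1, 0; 0, 0, 0, 1] :
          Matrix (Fin 4) (Fin 4) ℂ) ∨
      (g : Matrix (Fin 4) (Fin 4) ℂ) =
        (!![0, 0, 1, 0; 0, 0, 0, 1; 1, 0, 0, 0; 0, 1, 0, 0] : Matrix (Fin 4) (Fin 4) ℂ)}

open Equiv

lemma isPrimitiveRoot_zeta3 : IsPrimitiveRoot zeta3 3 := by
  simpa [zeta3] using Complex.isPrimitiveRoot_exp 3 (by norm_num)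

lemma isPrimitiveRoot_zeta8 : IsPrimitiveRoot zeta8 8 := by
  simpa [zeta8] using Complex.isPrimitiveRoot_exp 8 (by norm_num)

lemma zeta8_pow_four : zeta8 ^ 4 = -1 :=
  (isPrimitiveRoot_zeta8.pow_of_dvd (by norm_num) (by norm_num : 4 ∣ 8)).eq_neg_one_of_two_right

section Multipliers

variable {R A : Type*} [CommSemiring R] [Semiring A] [Algebra R A]

def Submodule.multipliers (W : Submodule R A) : Subalgebra R A where
  carrier := {a | ∀ v ∈ W, a * v ∈ W}
  mul_mem' {a b} ha hb v hv := by simpa only [mul_assoc] using ha _ (hb v hv)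
  add_mem' {a b} ha hb v hv := by simpa only [add_mul] using W.add_mem (ha v hv) (hb v hv)
  algebraMap_mem' r v hv := by simpa only [Algebra.smul_def] using W.smul_mem r hv

end Multipliers

section PointSeparation

variable {ι K : Type*} [Fintype ι] [Field K]

lemma Submodule.mulVec_mem_of_smul_mulVec_mem {W : Submodule K (ι → K)} {c : K} (hc : c ≠ 0)
    {M : Matrix ι ι K} {v : ι → K} (h : (c • M) *ᵥ v ∈ W) : M *ᵥ v ∈ W := by
  rwa [smul_mulVec, W.smul_mem_iff hc] at h

variable [DecidableEq ι]

lemma Subalgebra.single_one_mem_of_separates (A : Subalgebra K (ι → K)) {i : ι}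
    (hA : ∀ j ≠ i, ∃ a ∈ A, a i ≠ a j) : Pi.single i 1 ∈ A := by
  have hbump : ∀ j ≠ i, ∃ b ∈ A, b i = 1 ∧ b j = 0 := by
    intro j hj
    obtain ⟨a, haA, hne⟩ := hA j hj
    refine ⟨(a i - a j)⁻¹ • (a - algebraMap K _ (a j)),
      A.smul_mem (A.sub_mem haA (A.algebraMap_mem _)) _, ?_, ?_⟩
    · simp [inv_mul_cancel₀ (sub_ne_zero.mpr hne)]
    · simp
  choose b hbA hbi hbj using hbump
  have hprod : Pi.single i 1 = ∏ j : {j // j ≠ i}, b j j.2 := by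
    ext k
    rw [Finset.prod_apply]
    by_cases hk : k = i
    · subst hk
      simp [hbi]
    · rw [Pi.single_eq_of_ne hk, Finset.prod_eq_zero (Finset.mem_univ ⟨k, hk⟩) (hbj k hk)]
  rw [hprod]
  exact Subalgebra.prod_mem _ fun j _ => hbA j j.2

lemma Submodule.single_one_mem_of_multipliers_separate {W : Submodule K (ι → K)} {i : ι}
    (hW : ∀ j ≠ i, ∃ a ∈ W.multipliers, a i ≠ a j) {v : ι → K} (hv : v ∈ W) (hvi : v i ≠ 0) :
    Pi.single i 1 ∈ W := by
  have hmul : Pi.single i 1 * v = v i • Pi.single i 1 := by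
    ext k
    by_cases hk : k = i
    · subst hk; simp
    · simp [Pi.single_eq_of_ne hk]
  rw [← W.smul_mem_iff hvi, ← hmul]
  exact W.multipliers.single_one_mem_of_separates hW v hv

lemma Submodule.mem_multipliers_of_diagonal {W : Submodule K (ι → K)} {d : ι → K}
    (hd : ∀ v ∈ W, diagonal d *ᵥ v ∈ W) : d ∈ W.multipliers := fun v hv =>
  (funext (mulVec_diagonal d v) : diagonal d *ᵥ v = d * v) ▸ hd v hv

lemma Submodule.single_symm_mem_of_permMatrix {W : Submodule K (ι → K)} {σ : Perm ι}
    (hσ : ∀ v ∈ W, σ.permMatrix K *ᵥ v ∈ W) {i : ι} (hi : Pi.single i 1 ∈ W) :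
    Pi.single (σ.symm i) 1 ∈ W := by
  simpa only [permMatrix_mulVec, Pi.single_comp_equiv] using hσ _ hi

lemma Submodule.eq_top_of_forall_single_one_mem {W : Submodule K (ι → K)}
    (h : ∀ j, Pi.single j 1 ∈ W) : W = ⊤ := by
  rw [eq_top_iff, ← (Pi.basisFun K ι).span_eq, Submodule.span_le]
  rintro _ ⟨j, rfl⟩
  simpa using h j

end PointSeparation

lemma fin_four_mem_of_swap_invariant (T : Finset (Fin 4))
    (h₁ : ∀ j ∈ T, (swap 0 1 : Perm (Fin 4)).symm j ∈ T)
    (h₂ : ∀ j ∈ T, (swap 0 2 * swap 1 3 : Perm (Fin 4)).symm j ∈ T) {i : Fin 4} (hi : i ∈ T)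
    (j : Fin 4) : j ∈ T := by
  revert T i j
  decide

section SemiInvariant

variable {n R : Type*} [Fintype n] [CommRing R]

lemma semiInvariant_factor_unique [IsDomain R] {p : MvPolynomial n R} (hp : ∃ v, eval v p ≠ 0)
    {M : Matrix n n R} {c d : R} (hc : ∀ v, eval (M *ᵥ v) p = c * eval v p)
    (hd : ∀ v, eval (M *ᵥ v) p = d * eval v p) : c = d := by
  obtain ⟨v, hv⟩ := hp
  exact mul_right_cancel₀ hv ((hc v).symm.trans (hd v))

variable [DecidableEq n]

def semiInvariantSubgroup (p : MvPolynomial n R) : Subgroup (GL n R) where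
  carrier := {g | ∃ c : Rˣ, ∀ v, eval ((g : Matrix n n R) *ᵥ v) p = c * eval v p}
  one_mem' := ⟨1, by simp⟩
  mul_mem' := by
    rintro g h ⟨c, hc⟩ ⟨d, hd⟩
    exact ⟨c * d, fun v => by rw [Units.val_mul, ← mulVec_mulVec, hc, hd, Units.val_mul, mul_assoc]⟩
  inv_mem' := by
    rintro g ⟨c, hc⟩
    refine ⟨c⁻¹, fun v => ?_⟩
    have hv := hc ((g⁻¹ : GL n R) *ᵥ v)
    rw [mulVec_mulVec, ← Units.val_mul, mul_inv_cancel, Units.val_one, one_mulVec] at hv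
    rw [hv, Units.inv_mul_cancel_left]

variable [IsDomain R] {p : MvPolynomial n R}

noncomputable def semiInvariantSubgroup.character (hp : ∃ v, eval v p ≠ 0) :
    semiInvariantSubgroup p →* Rˣ where
  toFun g := g.2.choose
  map_one' := Units.ext <|
    semiInvariant_factor_unique hp (semiInvariantSubgroup p).one_mem.choose_spec (by simp)
  map_mul' g h := Units.ext <| semiInvariant_factor_unique hp (g * h).2.choose_spec fun v => by
    rw [Subgroup.coe_mul, Units.val_mul, ← mulVec_mulVec, g.2.choose_spec, h.2.choose_spec,
      Units.val_mul, mul_assoc]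

lemma semiInvariantSubgroup.eval_mulVec (hp : ∃ v, eval v p ≠ 0) (g : semiInvariantSubgroup p)
    (v : n → R) :
    eval (((g : GL n R) : Matrix n n R) *ᵥ v) p = character hp g * eval v p :=
  g.2.choose_spec v

lemma exists_character_of_le_semiInvariantSubgroup (hp : ∃ v, eval v p ≠ 0)
    {G : Subgroup (GL n R)} (hG : G ≤ semiInvariantSubgroup p) :
    ∃ χ : G →* Rˣ, ∀ (g : G) (v : n → R),
      eval (((g : GL n R)⁻¹ : GL n R) *ᵥ v) p = χ g * eval v p := by
  refine ⟨((semiInvariantSubgroup.character hp).comp (Subgroup.inclusion hG))⁻¹, fun g v => ?_⟩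
  simpa using semiInvariantSubgroup.eval_mulVec hp (Subgroup.inclusion hG g)⁻¹ v

end SemiInvariant

section Fermat

variable {ι R : Type*} [Fintype ι] [CommSemiring R]

noncomputable def fermatPolynomial (k : ℕ) : MvPolynomial ι R := ∑ i, X i ^ k

lemma eval_fermatPolynomial (k : ℕ) (v : ι → R) :
    eval v (fermatPolynomial k) = ∑ i, v i ^ k := by
  simp [fermatPolynomial]

lemma eval_fermatPolynomial_smul (k : ℕ) (c : R) (v : ι → R) :
    eval (c • v) (fermatPolynomial k) = c ^ k * eval v (fermatPolynomial k) := by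
  simp [eval_fermatPolynomial, mul_pow, Finset.mul_sum]

lemma eval_fermatPolynomial_comp_perm (k : ℕ) (σ : Perm ι) (v : ι → R) :
    eval (v ∘ σ) (fermatPolynomial k) = eval v (fermatPolynomial k) := by
  simp only [eval_fermatPolynomial, Function.comp_apply]
  exact Equiv.sum_comp σ (fun i => v i ^ k)

variable [DecidableEq ι]

lemma eval_fermatPolynomial_diagonal_mulVec {k : ℕ} {d : ι → R} (hd : ∀ i, d i ^ k = 1)
    (v : ι → R) : eval (diagonal d *ᵥ v) (fermatPolynomial k) = eval v (fermatPolynomial k) := by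
  simp [eval_fermatPolynomial, mulVec_diagonal, mul_pow, hd]

lemma eval_single_fermatPolynomial {k : ℕ} (hk : k ≠ 0) (i : ι) :
    eval (Pi.single i 1) (fermatPolynomial k : MvPolynomial ι R) = 1 := by
  simp [eval_fermatPolynomial, Pi.single_apply, ite_pow, zero_pow hk]

end Fermat

def torusWeights : Set (Fin 4 → ℂ) :=
  {![zeta3, 1, 1, zeta3⁻¹], ![1, zeta3, 1, zeta3⁻¹], ![1, 1, zeta3, zeta3⁻¹]}

def monomialGenerators : Set (Matrix (Fin 4) (Fin 4) ℂ) :=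
  {diagonal ![zeta3, 1, 1, zeta3⁻¹], diagonal ![1, zeta3, 1, zeta3⁻¹],
    diagonal ![1, 1, zeta3, zeta3⁻¹], zeta8 • (swap 0 1 : Perm (Fin 4)).permMatrix ℂ,
    (swap 0 2 * swap 1 3 : Perm (Fin 4)).permMatrix ℂ}

lemma monomialGroup_eq_closure :
    monomialGroup = Subgroup.closure (Units.val ⁻¹' monomialGenerators) := by
  have h₁ : (!![0, 1, 0, 0; 1, 0, 0, 0; 0, 0, 1, 0; 0, 0, 0, 1] : Matrix (Fin 4) (Fin 4) ℂ) =
      (swap 0 1 : Perm (Fin 4)).permMatrix ℂ := by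
    ext i j; fin_cases i <;> fin_cases j <;> simp [PEquiv.toMatrix_apply, swap_apply_def]
  have h₂ : (!![0, 0, 1, 0; 0, 0, 0, 1; 1, 0, 0, 0; 0, 1, 0, 0] : Matrix (Fin 4) (Fin 4) ℂ) =
      (swap 0 2 * swap 1 3 : Perm (Fin 4)).permMatrix ℂ := by
    ext i j; fin_cases i <;> fin_cases j <;> simp [PEquiv.toMatrix_apply, swap_apply_def]
  unfold monomialGroup
  rw [h₁, h₂]
  rfl

lemma diagonal_mem_monomialGenerators {d : Fin 4 → ℂ} (hd : d ∈ torusWeights) :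
    diagonal d ∈ monomialGenerators := by
  rcases hd with rfl | rfl | rfl <;> simp [monomialGenerators]

lemma torusWeights_separate {i j : Fin 4} (hij : j ≠ i) : ∃ d ∈ torusWeights, d i ≠ d j := by
  have h₁ : zeta3 ≠ 1 := isPrimitiveRoot_zeta3.ne_one (by norm_num)
  have h₂ : zeta3⁻¹ ≠ 1 := inv_ne_one.mpr h₁
  fin_cases i <;> fin_cases j <;> simp_all [torusWeights, eq_comm]

lemma det_eq_one_of_mem_monomialGenerators {M : Matrix (Fin 4) (Fin 4) ℂ}
    (hM : M ∈ monomialGenerators) : M.det = 1 := by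
  have hζ : zeta3 ≠ 0 := isPrimitiveRoot_zeta3.ne_zero (by norm_num)
  rcases hM with rfl | rfl | rfl | rfl | rfl <;> simp [Fin.prod_univ_four, hζ, zeta8_pow_four]

lemma exists_mem_monomialGroup_val_eq {M : Matrix (Fin 4) (Fin 4) ℂ}
    (hM : M ∈ monomialGenerators) : ∃ g ∈ monomialGroup, (g : Matrix (Fin 4) (Fin 4) ℂ) = M := by
  have hunit : IsUnit M.det := by rw [det_eq_one_of_mem_monomialGenerators hM]; exact isUnit_one
  refine ⟨GeneralLinearGroup.mk'' M hunit, ?_, rfl⟩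
  rw [monomialGroup_eq_closure]
  exact Subgroup.subset_closure hM

lemma det_eq_one_of_mem_monomialGroup {g : GL (Fin 4) ℂ} (hg : g ∈ monomialGroup) :
    (g : Matrix (Fin 4) (Fin 4) ℂ).det = 1 := by
  suffices monomialGroup ≤ GeneralLinearGroup.det.ker by
    simpa [Units.ext_iff] using this hg
  rw [monomialGroup_eq_closure, Subgroup.closure_le]
  intro x hx
  simpa [Units.ext_iff] using det_eq_one_of_mem_monomialGenerators hx

lemma fermatPolynomial_semiInvariant_of_mem_monomialGenerators {M : Matrix (Fin 4) (Fin 4) ℂ}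
    (hM : M ∈ monomialGenerators) :
    ∃ c : ℂˣ, ∀ v, eval (M *ᵥ v) (fermatPolynomial 3) = c * eval v (fermatPolynomial 3) := by
  have hζ : zeta3 ^ 3 = 1 := isPrimitiveRoot_zeta3.pow_eq_one
  have hζ' : zeta3⁻¹ ^ 3 = 1 := by rw [inv_pow, hζ, inv_one]
  have hdiag {d : Fin 4 → ℂ} (hd : ∀ i, d i ^ 3 = 1) : ∃ c : ℂˣ, ∀ v,
      eval (diagonal d *ᵥ v) (fermatPolynomial 3) = c * eval v (fermatPolynomial 3) :=
    ⟨1, fun v => by rw [eval_fermatPolynomial_diagonal_mulVec hd, Units.val_one, one_mul]⟩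
  rcases hM with rfl | rfl | rfl | rfl | rfl
  iterate 3 exact hdiag fun i => by fin_cases i <;> simp [hζ, hζ']
  · refine ⟨Units.mk0 zeta8 (isPrimitiveRoot_zeta8.ne_zero (by norm_num)) ^ 3, fun v => ?_⟩
    rw [smul_mulVec, eval_fermatPolynomial_smul, permMatrix_mulVec, eval_fermatPolynomial_comp_perm]
    simp
  · exact ⟨1, fun v => by
      rw [permMatrix_mulVec, eval_fermatPolynomial_comp_perm, Units.val_one, one_mul]⟩

lemma monomialGroup_le_semiInvariantSubgroup :
    monomialGroup ≤ semiInvariantSubgroup (fermatPolynomial 3) := by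
  rw [monomialGroup_eq_closure, Subgroup.closure_le]
  exact fun g hg => fermatPolynomial_semiInvariant_of_mem_monomialGenerators hg

lemma single_one_mem_of_monomialGenerators_invariant {W : Submodule ℂ (Fin 4 → ℂ)}
    (hW : ∀ M ∈ monomialGenerators, ∀ v ∈ W, M *ᵥ v ∈ W) {i : Fin 4} (hi : Pi.single i 1 ∈ W)
    (j : Fin 4) : Pi.single j 1 ∈ W := by
  classical
  have hζ8 : zeta8 ≠ 0 := isPrimitiveRoot_zeta8.ne_zero (by norm_num)
  have hσ : ∀ k, Pi.single k 1 ∈ W → Pi.single ((swap 0 1 : Perm (Fin 4)).symm k) 1 ∈ W :=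
    fun k => W.single_symm_mem_of_permMatrix fun v hv =>
      W.mulVec_mem_of_smul_mulVec_mem hζ8 (hW _ (by simp [monomialGenerators]) v hv)
  have hτ : ∀ k, Pi.single k 1 ∈ W →
      Pi.single ((swap 0 2 * swap 1 3 : Perm (Fin 4)).symm k) 1 ∈ W :=
    fun k => W.single_symm_mem_of_permMatrix (hW _ (by simp [monomialGenerators]))
  simpa using fin_four_mem_of_swap_invariant {k | Pi.single k 1 ∈ W} (by simpa using hσ)
    (by simpa using hτ) (by simpa using hi) j

lemma eq_bot_or_eq_top_of_monomialGroup_invariant (W : Submodule ℂ (Fin 4 → ℂ))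
    (hW : ∀ g ∈ monomialGroup, ∀ v ∈ W, (g : Matrix (Fin 4) (Fin 4) ℂ) *ᵥ v ∈ W) :
    W = ⊥ ∨ W = ⊤ := by
  have hM : ∀ M ∈ monomialGenerators, ∀ v ∈ W, M *ᵥ v ∈ W := by
    intro M hM v hv
    obtain ⟨g, hg, rfl⟩ := exists_mem_monomialGroup_val_eq hM
    exact hW g hg v hv
  refine or_iff_not_imp_left.mpr fun hbot => ?_
  obtain ⟨v, hv, hv0⟩ := W.ne_bot_iff.mp hbot
  obtain ⟨i, hi⟩ := Function.ne_iff.mp hv0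
  have hsep : ∀ j ≠ i, ∃ a ∈ W.multipliers, a i ≠ a j := fun j hj => by
    obtain ⟨d, hd, hdij⟩ := torusWeights_separate hj
    exact ⟨d, W.mem_multipliers_of_diagonal (hM _ (diagonal_mem_monomialGenerators hd)), hdij⟩
  exact W.eq_top_of_forall_single_one_mem <| single_one_mem_of_monomialGenerators_invariant hM <|
    W.single_one_mem_of_multipliers_separate hsep hv hi

/-- The group generated by the five listed matrices lies in `SL(4, ℂ)`, acts
irreducibly on `ℂ⁴`, and has the cubic form `x³ + y³ + u³ + v³` as a semi-invariant. -/
theorem stmt_12 :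
    (∀ g ∈ monomialGroup, Matrix.det (g : Matrix (Fin 4) (Fin 4) ℂ) = 1) ∧
    (∀ W : Submodule ℂ (Fin 4 → ℂ),
      (∀ g ∈ monomialGroup, ∀ v ∈ W, Matrix.mulVec (g : Matrix (Fin 4) (Fin 4) ℂ) v ∈ W) →
      W = ⊥ ∨ W = ⊤) ∧
    (∃ χ : monomialGroup →* ℂˣ, ∀ (g : monomialGroup) (v : Fin 4 → ℂ),
      MvPolynomial.eval
          (Matrix.mulVec (((g : GL (Fin 4) ℂ)⁻¹ : GL (Fin 4) ℂ) : Matrix (Fin 4) (Fin 4) ℂ) v)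
          (X 0 ^ 3 + X 1 ^ 3 + X 2 ^ 3 + X 3 ^ 3 : MvPolynomial (Fin 4) ℂ)
        = (χ g : ℂ) *
          MvPolynomial.eval v (X 0 ^ 3 + X 1 ^ 3 + X 2 ^ 3 + X 3 ^ 3 : MvPolynomial (Fin 4) ℂ)) := by
  have hcubic : (X 0 ^ 3 + X 1 ^ 3 + X 2 ^ 3 + X 3 ^ 3 : MvPolynomial (Fin 4) ℂ) =
      fermatPolynomial 3 := by
    simp [fermatPolynomial, Fin.sum_univ_four]
  refine ⟨fun g hg => det_eq_one_of_mem_monomialGroup hg,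
    eq_bot_or_eq_top_of_monomialGroup_invariant, ?_⟩
  rw [hcubic]
  exact exists_character_of_le_semiInvariantSubgroup
    ⟨Pi.single 0 1, by rw [eval_single_fermatPolynomial three_ne_zero]; exact one_ne_zero⟩
    monomialGroup_le_semiInvariantSubgroup
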